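/- arXiv:2207.09882 — 2 statements merged into one kernel-verified Lean document; each statement's English description precedes it below -/
import Mathlib

section
/- For block upper-triangular matrices, if A and C are n×n complex matrices, then exp([[A, C],[0, A]]) = [[e^A, D],[0, e^A]] where D = ∫₀¹ e^{sA} C e^{(1-s)A} ds, which equals the directional (Gateaux) derivative of the matrix exponential at A in direction C. -/
/-!
Everything rests on Duhamel's formula `exp X - exp Y = ∫₀¹ e^{sX} (X - Y) e^{(1-s)Y} ds`, obtained
by differentiating `s ↦ e^{sX} e^{(1-s)Y}`.

With `X = A + tC` and `Y = A` it gives `exp (A + tC) - exp A = t • g t` for a continuous `g`, so the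
derivative at `0` is `g 0 = ∫₀¹ e^{sA} C e^{(1-s)A} ds`.

For the block identity write `[[A, C], [0, A]] = D + N` with `D = [[A, 0], [0, A]]` and
`N = [[0, C], [0, 0]]`. Since `e^{tD}` is block diagonal, `N e^{tD} N = 0`; Duhamel's formula for
`s(D + N)` and `sD`, multiplied by `N` on the right, then gives `e^{s(D+N)} N = e^{sD} N`. Hence
Duhamel's formula for `D + N` and `D` reads `exp (D + N) = exp D + ∫₀¹ e^{sD} N e^{(1-s)D} ds`, and
the integrand is the block matrix `[[0, e^{sA} C e^{(1-s)A}], [0, 0]]`.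
-/

open Matrix NormedSpace

attribute [local instance] Matrix.linftyOpNormedRing Matrix.linftyOpNormedAlgebra

theorem hasDerivAt_of_sub_eq_smul {𝕜 E : Type*} [NontriviallyNormedField 𝕜]
    [NormedAddCommGroup E] [NormedSpace 𝕜 E] {f g : 𝕜 → E} {x : 𝕜}
    (hfg : ∀ y, f y - f x = (y - x) • g y) (hg : ContinuousAt g x) :
    HasDerivAt f (g x) x := by
  rw [hasDerivAt_iff_tendsto_slope]
  refine (hg.tendsto.mono_left nhdsWithin_le_nhds).congr' ?_
  filter_upwards [self_mem_nhdsWithin] with y hy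
  rw [slope_def_module, hfg, smul_smul, inv_mul_cancel₀ (sub_ne_zero.2 hy), one_smul]

section BanachAlgebra

variable {𝔸 : Type*} [NormedRing 𝔸] [NormedAlgebra ℝ 𝔸] [CompleteSpace 𝔸]

-- `exp_continuous` asks for a normed `ℚ`-algebra.
@[fun_prop]
theorem continuous_exp_real : Continuous (exp : 𝔸 → 𝔸) :=
  continuous_iff_continuousAt.2 fun x => (exp_analytic (𝕂 := ℝ) x).continuousAt

theorem intervalIntegral_mul_const_of_integrable {f : ℝ → 𝔸} {a b : ℝ}
    (hf : IntervalIntegrable f MeasureTheory.volume a b) (c : 𝔸) :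
    ∫ s in a..b, f s * c = (∫ s in a..b, f s) * c :=
  ((ContinuousLinearMap.mul ℝ 𝔸).flip c).intervalIntegral_comp_comm hf

theorem exp_sub_exp_eq_intervalIntegral (X Y : 𝔸) :
    exp X - exp Y = ∫ s in (0:ℝ)..1, exp (s • X) * (X - Y) * exp ((1 - s) • Y) := by
  have hderiv (s : ℝ) : HasDerivAt (fun s : ℝ => exp (s • X) * exp ((1 - s) • Y))
      (exp (s • X) * (X - Y) * exp ((1 - s) • Y)) s := by
    have hY := (hasDerivAt_exp_smul_const' Y (1 - s)).scomp s ((hasDerivAt_id s).const_sub 1)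
    convert (hasDerivAt_exp_smul_const X s).mul hY using 1
    · rfl
    · simp only [Function.comp_apply, neg_one_smul, mul_neg, mul_sub, sub_mul, mul_assoc]
      abel
  rw [intervalIntegral.integral_eq_sub_of_hasDerivAt (fun s _ => hderiv s)
    (Continuous.intervalIntegrable (by fun_prop) _ _)]
  simp

theorem exp_smul_add_mul_eq_exp_smul_mul {D N : 𝔸} (h : ∀ t : ℝ, N * exp (t • D) * N = 0)
    (s : ℝ) : exp (s • (D + N)) * N = exp (s • D) * N := by
  have hvanish (u : ℝ) :
      exp (u • s • (D + N)) * (s • (D + N) - s • D) * exp ((1 - u) • s • D) * N = 0 := by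
    rw [← smul_sub, add_sub_cancel_left, mul_assoc, mul_assoc, ← mul_assoc (s • N),
      smul_mul_assoc, smul_mul_assoc, smul_smul (1 - u), h, smul_zero, mul_zero]
  rw [← sub_eq_zero, ← sub_mul, exp_sub_exp_eq_intervalIntegral,
    ← intervalIntegral_mul_const_of_integrable (Continuous.intervalIntegrable (by fun_prop) _ _)]
  simp only [hvanish, intervalIntegral.integral_zero]

theorem exp_add_eq_add_intervalIntegral {D N : 𝔸} (h : ∀ t : ℝ, N * exp (t • D) * N = 0) :
    exp (D + N) = exp D + ∫ s in (0:ℝ)..1, exp (s • D) * N * exp ((1 - s) • D) := by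
  rw [← sub_eq_iff_eq_add', exp_sub_exp_eq_intervalIntegral, add_sub_cancel_left]
  refine intervalIntegral.integral_congr fun s _ => ?_
  simp only [exp_smul_add_mul_eq_exp_smul_mul h]

theorem hasDerivAt_exp_add_smul (A C : 𝔸) :
    HasDerivAt (fun t : ℝ => exp (A + t • C))
      (∫ s in (0:ℝ)..1, exp (s • A) * C * exp ((1 - s) • A)) 0 := by
  set g : ℝ → 𝔸 := fun t => ∫ s in (0:ℝ)..1, exp (s • (A + t • C)) * C * exp ((1 - s) • A)
  have hg : Continuous g :=
    intervalIntegral.continuous_parametric_intervalIntegral_of_continuous' (by fun_prop) 0 1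
  have hfg (t : ℝ) : exp (A + t • C) - exp (A + (0:ℝ) • C) = (t - 0) • g t := by
    rw [zero_smul, add_zero, sub_zero, exp_sub_exp_eq_intervalIntegral, add_sub_cancel_left,
      ← intervalIntegral.integral_smul]
    simp only [mul_smul_comm, smul_mul_assoc]
  simpa [g] using hasDerivAt_of_sub_eq_smul hfg hg.continuousAt

end BanachAlgebra

namespace Matrix

variable {n : Type*} [Fintype n] [DecidableEq n] {𝕜 : Type*} [RCLike 𝕜]

def fromBlocksDiagRingHom : Matrix n n 𝕜 →+* Matrix (n ⊕ n) (n ⊕ n) 𝕜 where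
  toFun B := fromBlocks B 0 0 B
  map_one' := fromBlocks_one
  map_mul' B B' := by simp [fromBlocks_multiply]
  map_zero' := fromBlocks_zero
  map_add' B B' := by simp [fromBlocks_add]

theorem exp_fromBlocks_diag (B : Matrix n n 𝕜) :
    exp (fromBlocks B 0 0 B) = fromBlocks (exp B) 0 0 (exp B) :=
  (map_exp fromBlocksDiagRingHom
    (continuous_id.matrix_fromBlocks continuous_const continuous_const continuous_id) B).symm

theorem linfty_opNNNorm_fromBlocks₁₂ (X : Matrix n n 𝕜) :
    ‖fromBlocks (0 : Matrix n n 𝕜) X 0 (0 : Matrix n n 𝕜)‖₊ = ‖X‖₊ := by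
  rw [linfty_opNNNorm_def, linfty_opNNNorm_def, ← Finset.univ_disjSum_univ, Finset.sup_disjSum]
  simp

def fromBlocks₁₂ₗᵢ : Matrix n n 𝕜 →ₗᵢ[ℝ] Matrix (n ⊕ n) (n ⊕ n) 𝕜 where
  toFun X := fromBlocks 0 X 0 0
  map_add' X Y := by simp [fromBlocks_add]
  map_smul' c X := by simp [fromBlocks_smul]
  norm_map' X := congrArg NNReal.toReal (linfty_opNNNorm_fromBlocks₁₂ X)

theorem intervalIntegral_fromBlocks₁₂ (f : ℝ → Matrix n n 𝕜) (a b : ℝ) :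
    ∫ s in a..b, fromBlocks (0 : Matrix n n 𝕜) (f s) 0 (0 : Matrix n n 𝕜) =
      fromBlocks 0 (∫ s in a..b, f s) 0 0 := by
  -- Instance search misses properness, hence completeness, of the matrices over `n ⊕ n`.
  have := FiniteDimensional.proper_real (Matrix (n ⊕ n) (n ⊕ n) 𝕜)
  exact fromBlocks₁₂ₗᵢ.intervalIntegral_comp_comm f

end Matrix

/-- Van Loan auxiliary matrix identity: the exponential of the block
upper-triangular matrix `[[A, C], [0, A]]` has the exponential `exp A` on the
diagonal blocks and the directional (Gateaux) derivative of `exp` at `A` in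
direction `C`, given by the integral `∫₀¹ e^{sA} C e^{(1-s)A} ds`, in the
upper-right block. -/
theorem van_loan_auxiliary_matrix (d : ℕ) (A C : Matrix (Fin d) (Fin d) ℂ) :
    exp (Matrix.fromBlocks A C 0 A) =
      Matrix.fromBlocks (exp A)
        (∫ s in (0:ℝ)..1, exp (s • A) * C * exp ((1 - s) • A))
        0 (exp A) ∧
    (∫ s in (0:ℝ)..1, exp (s • A) * C * exp ((1 - s) • A)) =
      deriv (fun t : ℝ => exp (A + t • C)) 0 := by
  have hsplit : fromBlocks A C 0 A = fromBlocks A 0 0 A + fromBlocks 0 C 0 0 := by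
    simp [fromBlocks_add]
  have hexp (t : ℝ) :
      exp (t • fromBlocks A 0 0 A) = fromBlocks (exp (t • A)) 0 0 (exp (t • A)) := by
    rw [fromBlocks_smul, smul_zero, exp_fromBlocks_diag]
  have hnil (t : ℝ) :
      fromBlocks 0 C 0 0 * exp (t • fromBlocks A 0 0 A) * fromBlocks 0 C 0 0 = 0 := by
    simp [hexp, fromBlocks_multiply]
  have hintegrand (s : ℝ) :
      exp (s • fromBlocks A 0 0 A) * fromBlocks 0 C 0 0 * exp ((1 - s) • fromBlocks A 0 0 A) =
        fromBlocks 0 (exp (s • A) * C * exp ((1 - s) • A)) 0 0 := by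
    simp [hexp, fromBlocks_multiply]
  -- Stated with its type so that `exp` carries the product topology of the goal; the normed
  -- topology of the general lemma agrees with it only up to unfolding, which `rw` does not see.
  have hperturb : exp (fromBlocks A 0 0 A + fromBlocks 0 C 0 0) =
      exp (fromBlocks A 0 0 A) + ∫ s in (0:ℝ)..1,
        exp (s • fromBlocks A 0 0 A) * fromBlocks 0 C 0 0 * exp ((1 - s) • fromBlocks A 0 0 A) :=
    exp_add_eq_add_intervalIntegral hnil
  refine ⟨?_, (hasDerivAt_exp_add_smul A C).deriv.symm⟩
  rw [hsplit, hperturb, exp_fromBlocks_diag]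
  simp only [hintegrand, intervalIntegral_fromBlocks₁₂, fromBlocks_add, add_zero, zero_add]
end

section
/- For a skew-symmetric 3×3 real matrix S with parameters (x, y, z), defined by S = [[0, z, -y],[-z, 0, x],[y, -x, 0]], the matrix exponential satisfies the Rodrigues formula exp(tS) = I + (sin(tr)/r)·S + ((1 − cos(tr))/r²)·S², where r = √(x²+y²+z²) > 0. -/
open Matrix NormedSpace

open scoped Nat

/-! The skew matrix satisfies `S³ = -r² S` (its characteristic polynomial is `λ³ + r² λ`), so
every power of `S` is a multiple of `S` or of `S²`. The exponential series of `t S` therefore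
splits into an odd part, which is the sine series at `t r` divided by `r`, times `S`, and an even
part which, past its constant term `1`, is the cosine series at `t r` minus `1`, divided by `-r²`,
times `S²`. -/

section PowThree

variable {R A : Type*} [CommSemiring R] [Semiring A] [Algebra R A]

theorem pow_two_mul_add_one_of_pow_three_eq_smul {a : A} {c : R} (ha : a ^ 3 = c • a) (k : ℕ) :
    a ^ (2 * k + 1) = c ^ k • a := by
  induction k with
  | zero => simp
  | succ k ih =>
    rw [show 2 * (k + 1) + 1 = 2 * k + 1 + 2 by ring, pow_add, ih, smul_mul_assoc, ← pow_succ',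
      ha, smul_smul, pow_succ]

theorem pow_two_mul_add_two_of_pow_three_eq_smul {a : A} {c : R} (ha : a ^ 3 = c • a) (k : ℕ) :
    a ^ (2 * k + 2) = c ^ k • a ^ 2 := by
  rw [pow_succ, pow_two_mul_add_one_of_pow_three_eq_smul ha, smul_mul_assoc, ← pow_two]

end PowThree

section ExpOfPowThree

variable {A : Type*} [Ring A] [Algebra ℝ A] [TopologicalSpace A] [ContinuousSMul ℝ A]

theorem hasSum_expSeries_odd_of_pow_three_eq {a : A} {r : ℝ} (hr : r ≠ 0)
    (ha : a ^ 3 = -(r ^ 2) • a) (t : ℝ) :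
    HasSum (fun k : ℕ => ((2 * k + 1)! : ℝ)⁻¹ • (t • a) ^ (2 * k + 1))
      ((Real.sin (t * r) / r) • a) := by
  refine (((Real.hasSum_sin (t * r)).div_const r).smul_const a).congr_fun fun k => ?_
  rw [smul_pow, pow_two_mul_add_one_of_pow_three_eq_smul ha, smul_smul, smul_smul]
  congr 1
  field_simp
  ring

theorem hasSum_expSeries_even_of_pow_three_eq [IsTopologicalAddGroup A] {a : A} {r : ℝ}
    (hr : r ≠ 0) (ha : a ^ 3 = -(r ^ 2) • a) (t : ℝ) :
    HasSum (fun k : ℕ => ((2 * k)! : ℝ)⁻¹ • (t • a) ^ (2 * k))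
      (1 + ((1 - Real.cos (t * r)) / r ^ 2) • a ^ 2) := by
  rw [← hasSum_nat_add_iff' 1]
  have hcos := (hasSum_nat_add_iff' 1).mpr (Real.hasSum_cos (t * r))
  simp only [Finset.sum_range_one, mul_zero, pow_zero, Nat.factorial_zero, Nat.cast_one, inv_one,
    one_smul, div_one, one_mul, add_sub_cancel_left] at hcos ⊢
  replace hcos := hcos.neg
  rw [neg_sub] at hcos
  refine ((hcos.div_const (r ^ 2)).smul_const (a ^ 2)).congr_fun fun k => ?_
  rw [smul_pow, mul_add_one, pow_two_mul_add_two_of_pow_three_eq_smul ha, smul_smul, smul_smul]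
  congr 1
  field_simp
  ring

theorem exp_smul_eq_of_pow_three_eq [IsTopologicalRing A] [T2Space A] {a : A} {r : ℝ}
    (hr : r ≠ 0) (ha : a ^ 3 = -(r ^ 2) • a) (t : ℝ) :
    exp (t • a) = 1 + (Real.sin (t * r) / r) • a + ((1 - Real.cos (t * r)) / r ^ 2) • a ^ 2 := by
  rw [exp_eq_tsum ℝ, add_right_comm]
  exact (HasSum.even_add_odd (f := fun n => (n ! : ℝ)⁻¹ • (t • a) ^ n)
    (hasSum_expSeries_even_of_pow_three_eq hr ha t)
    (hasSum_expSeries_odd_of_pow_three_eq hr ha t)).tsum_eq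

end ExpOfPowThree

theorem skew_fin_three_pow_three {R : Type*} [CommRing R] (x y z : R) :
    !![0, z, -y; -z, 0, x; y, -x, 0] ^ 3 =
      -(x ^ 2 + y ^ 2 + z ^ 2) • !![0, z, -y; -z, 0, x; y, -x, 0] := by
  ext i j
  fin_cases i <;> fin_cases j <;> simp [pow_three, Matrix.mul_apply, Fin.sum_univ_three] <;> ring

/-- Rodrigues' rotation formula: for the skew-symmetric matrix `S` built from
`(x, y, z)` with `r = √(x² + y² + z²) > 0`, the matrix exponential satisfies
`exp(tS) = I + (sin(tr)/r) S + ((1 − cos(tr))/r²) S²`. -/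
theorem rodrigues_formula (x y z t : ℝ)
    (S : Matrix (Fin 3) (Fin 3) ℝ)
    (hS : S = !![0, z, -y; -z, 0, x; y, -x, 0])
    (r : ℝ) (hr : r = Real.sqrt (x ^ 2 + y ^ 2 + z ^ 2)) (hrpos : 0 < r) :
    NormedSpace.exp (t • S) =
      1 + (Real.sin (t * r) / r) • S + ((1 - Real.cos (t * r)) / r ^ 2) • S ^ 2 := by
  have hr2 : r ^ 2 = x ^ 2 + y ^ 2 + z ^ 2 := by
    rw [hr, Real.sq_sqrt (by positivity)]
  refine exp_smul_eq_of_pow_three_eq hrpos.ne' ?_ t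
  rw [hS, hr2, skew_fin_three_pow_three]
end
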